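/- arXiv:1903.11566 — 2 statements merged into one kernel-verified Lean document; each statement's English description precedes it below -/
import Mathlib

section
/- Let R be a commutative unital ring and let p, r ≥ 0. Let D1 be a p×p matrix, u1, w1 ∈ R^p, D2 an r×r matrix, u2, w2 ∈ R^r. Form the (p+1+r)×(p+1+r) block matrix D = [[D1, u1, C], [w1ᵀ, 0, w2ᵀ], [C', u2, D2]], where the cross blocks are C_{ij} = (u1)_i + (w2)_j and C'_{ij} = (u2)_i + (w1)_j. Set M1 = [[D1, u1], [w1ᵀ, 0]] and M2 = [[0, w2ᵀ], [u2, D2]]. Then cof(D) = cof(M1)·cof(M2) and det(D) = det(M1)·cof(M2) + cof(M1)·det(M2). -/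
/-- The cofactor-sum of a square matrix: the sum over all `i, j` of
`(-1)^(i+j)` times the determinant of the submatrix obtained by deleting
row `i` and column `j`. (For the empty matrix we set it to `0`.) -/
def cofSum {R : Type*} [CommRing R] : ∀ {n : ℕ}, Matrix (Fin n) (Fin n) R → R
  | 0, _ => 0
  | m + 1, A => ∑ i : Fin (m + 1), ∑ j : Fin (m + 1),
      (-1 : R) ^ ((i : ℕ) + (j : ℕ)) * (A.submatrix i.succAbove j.succAbove).det

/-- A vector `u ∈ R^p` viewed as a `p × 1` column matrix. -/
def colV {R : Type*} [CommRing R] {p : ℕ} (u : Fin p → R) : Matrix (Fin p) (Fin 1) R :=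
  Matrix.of fun i _ => u i

/-- A vector `w ∈ R^p` viewed as a `1 × p` row matrix. -/
def rowV {R : Type*} [CommRing R] {p : ℕ} (w : Fin p → R) : Matrix (Fin 1) (Fin p) R :=
  Matrix.of fun _ j => w j

/-- The canonical identification of `(Fin p ⊕ Fin 1) ⊕ Fin r` with `Fin (p + 1 + r)`. -/
def toFin3 (p r : ℕ) : (Fin p ⊕ Fin 1) ⊕ Fin r ≃ Fin (p + 1 + r) :=
  (Equiv.sumCongr finSumFinEquiv (Equiv.refl (Fin r))).trans finSumFinEquiv

open Matrix Polynomial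

section CofMachinery

variable {S : Type*} [CommRing S]

/-- The sum of all entries of the adjugate. -/
def Cof {n : Type*} [Fintype n] [DecidableEq n] (A : Matrix n n S) : S :=
  ∑ i, ∑ j, A.adjugate i j

lemma adjugate_eq_minor {n : ℕ} (A : Matrix (Fin (n+1)) (Fin (n+1)) S) (i j : Fin (n+1)) :
    A.adjugate i j = (-1 : S) ^ ((i : ℕ) + (j : ℕ)) * (A.submatrix j.succAbove i.succAbove).det := by
  rw [Matrix.adjugate_apply, Matrix.det_succ_row _ j]
  have h1 : ∀ k : Fin (n+1),
      (A.updateRow j (Pi.single i 1)).submatrix j.succAbove k.succAbove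
        = A.submatrix j.succAbove k.succAbove := by
    intro k
    ext a b
    simp [Matrix.submatrix_apply, Matrix.updateRow_ne (Fin.succAbove_ne j a)]
  rw [Finset.sum_eq_single i]
  · rw [h1]
    simp [Pi.single_apply, mul_comm, add_comm (j:ℕ) (i:ℕ)]
  · intro b _ hb
    simp [Pi.single_apply, hb.symm]
  · simp

lemma cofSum_eq_Cof : ∀ {n : ℕ} (A : Matrix (Fin n) (Fin n) S), cofSum A = Cof A
  | 0, A => by simp [cofSum, Cof]
  | n + 1, A => by
    rw [Cof]; refine Eq.trans ?_ Finset.sum_comm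
    simp only [adjugate_eq_minor]
    show (∑ i : Fin (n+1), ∑ j : Fin (n+1),
      (-1 : S) ^ ((i : ℕ) + (j : ℕ)) * (A.submatrix i.succAbove j.succAbove).det) = _
    refine Finset.sum_congr rfl fun i _ => Finset.sum_congr rfl fun j _ => ?_
    rw [add_comm (j : ℕ) (i : ℕ)]

lemma Cof_submatrix {n m : Type*} [Fintype n] [DecidableEq n] [Fintype m] [DecidableEq m]
    (e : n ≃ m) (A : Matrix m m S) : Cof (A.submatrix e e) = Cof A := by
  rw [Cof, Cof, Matrix.adjugate_submatrix_equiv_self]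
  rw [← Equiv.sum_comp e (fun i => ∑ j, A.adjugate i j)]
  refine Finset.sum_congr rfl fun i _ => ?_
  simp only [Matrix.submatrix_apply]
  exact Equiv.sum_comp e (fun j => A.adjugate (e i) j)

lemma Cof_map {n : Type*} [Fintype n] [DecidableEq n] {T : Type*} [CommRing T]
    (f : S →+* T) (A : Matrix n n S) : Cof (A.map f) = f (Cof A) := by
  rw [Cof, Cof]
  have : (A.map f).adjugate = (A.adjugate).map f := by
    have := RingHom.map_adjugate f A
    simpa [RingHom.mapMatrix_apply] using this.symm
  simp [this, map_sum]

/-- All-ones matrix. -/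
def ones (m n : Type*) : Matrix m n S := Matrix.of fun _ _ => (1 : S)

/-- Determinant of a rank-one (all-ones) perturbation. -/
lemma det_add_smul_ones {n : Type*} [Fintype n] [DecidableEq n] (A : Matrix n n S) (x : S) :
    (A + x • ones n n).det = A.det + x * Cof A := by
  classical
  have key : (A + x • ones n n).det
      = ∑ s : Finset n, (Matrix.detRowAlternating (s.piecewise (fun _ _ => x) A) : S) := by
    have := (Matrix.detRowAlternating : (n → S) [⋀^n]→ₗ[S] S).toMultilinearMap.map_add_univ
      (fun _ _ => x) A
    convert this using 2
    · show Matrix.detRowAlternating _ = Matrix.detRowAlternating _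
      congr 1
      ext i j
      simp [ones, Matrix.add_apply, add_comm]
      rfl
    · rfl
  rw [key]
  have hzero : ∀ s : Finset n, ¬ s.card ≤ 1 →
      (Matrix.detRowAlternating (s.piecewise (fun _ _ => x) A) : S) = 0 := by
    intro s hs
    push_neg at hs
    obtain ⟨i, hi, j, hj, hij⟩ := Finset.one_lt_card.mp hs
    exact Matrix.detRowAlternating.map_eq_zero_of_eq _
      (by exact (Finset.piecewise_eq_of_mem s (fun _ _ => x) A hi).trans (Finset.piecewise_eq_of_mem s (fun _ _ => x) A hj).symm) hij
  rw [← Finset.sum_filter_add_sum_filter_not Finset.univ (fun s => s.card ≤ 1)]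
  rw [Finset.sum_eq_zero (fun s hs => hzero s (Finset.mem_filter.mp hs).2), add_zero]
  have hset : Finset.univ.filter (fun s : Finset n => s.card ≤ 1)
      = insert (∅ : Finset n) (Finset.univ.image (fun i : n => {i})) := by
    ext s
    simp only [Finset.mem_filter, Finset.mem_univ, true_and, Finset.mem_insert,
      Finset.mem_image]
    constructor
    · intro h
      rcases Nat.le_one_iff_eq_zero_or_eq_one.mp h with h' | h'
      · exact Or.inl (Finset.card_eq_zero.mp h')
      · obtain ⟨i, hi⟩ := Finset.card_eq_one.mp h'
        exact Or.inr ⟨i, hi.symm⟩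
    · rintro (rfl | ⟨i, rfl⟩) <;> simp
  rw [hset, Finset.sum_insert (by simp [Finset.eq_empty_iff_forall_notMem]),
    Finset.sum_image (fun a _ b _ h => Finset.singleton_injective h)]
  have hempty : (Matrix.detRowAlternating ((∅ : Finset n).piecewise (fun _ _ => x) A) : S)
      = A.det := by exact congrArg Matrix.detRowAlternating (Finset.piecewise_empty (fun _ _ => x) A)
  have hsingle : ∀ i : n, (Matrix.detRowAlternating (({i} : Finset n).piecewise (fun _ _ => x) A) : S)
      = x * ∑ j, A.adjugate j i := by
    intro i
    have h1 : (({i} : Finset n).piecewise (fun _ _ => x) A) = A.updateRow i (x • fun _ => (1:S)) := by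
      ext a b
      by_cases h : a = i
      · subst h; simp [Finset.piecewise_eq_of_mem]
        exact congrFun (Finset.piecewise_eq_of_mem {a} (fun _ _ => x) A (Finset.mem_singleton_self a)) b
      · simp [Finset.piecewise, h, Matrix.updateRow_ne h]
    rw [h1]
    show (A.updateRow i (x • fun _ => (1:S))).det = _
    rw [Matrix.det_updateRow_smul]
    congr 1
    have h2 : (fun _ => (1 : S)) = ∑ j : n, Pi.single j (1 : S) := by
      ext b; simp [Pi.single_apply]
    rw [h2]
    have h4 : (A.updateRow i (∑ j : n, Pi.single j (1:S))).det
        = ∑ j : n, (A.updateRow i (Pi.single j (1:S))).det :=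
      Matrix.detRowAlternating.toMultilinearMap.map_update_sum Finset.univ i
        (fun j => Pi.single j (1:S)) A
    rw [h4]
    exact Finset.sum_congr rfl fun j _ => (Matrix.adjugate_apply A j i).symm
  rw [hempty]
  rw [Finset.sum_congr rfl (fun i _ => hsingle i), ← Finset.mul_sum, Cof, Finset.sum_comm]

end CofMachinery

section BlockOps

variable {S : Type*} [CommRing S] {p r : ℕ}

def E1 : Matrix (Fin p ⊕ Fin 1) (Fin p ⊕ Fin 1) S :=
  fromBlocks 1 (colV fun _ => (-1 : S)) 0 1

def F1 : Matrix (Fin p ⊕ Fin 1) (Fin p ⊕ Fin 1) S :=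
  fromBlocks 1 0 (rowV fun _ => (-1 : S)) 1

def E2 : Matrix (Fin 1 ⊕ Fin r) (Fin 1 ⊕ Fin r) S :=
  fromBlocks 1 0 (colV fun _ => (-1 : S)) 1

def F2 : Matrix (Fin 1 ⊕ Fin r) (Fin 1 ⊕ Fin r) S :=
  fromBlocks 1 (rowV fun _ => (-1 : S)) 0 1

def EE : Matrix ((Fin p ⊕ Fin 1) ⊕ Fin r) ((Fin p ⊕ Fin 1) ⊕ Fin r) S :=
  fromBlocks E1 0 (fromCols 0 (colV fun _ => (-1 : S))) 1

def FF : Matrix ((Fin p ⊕ Fin 1) ⊕ Fin r) ((Fin p ⊕ Fin 1) ⊕ Fin r) S :=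
  fromBlocks F1 (fromRows 0 (rowV fun _ => (-1 : S))) 0 1

lemma detE1 : (E1 (p := p) (S := S)).det = 1 := by rw [E1, det_fromBlocks_zero₂₁]; simp
lemma detF1 : (F1 (p := p) (S := S)).det = 1 := by rw [F1, det_fromBlocks_zero₁₂]; simp
lemma detE2 : (E2 (r := r) (S := S)).det = 1 := by rw [E2, det_fromBlocks_zero₁₂]; simp
lemma detF2 : (F2 (r := r) (S := S)).det = 1 := by rw [F2, det_fromBlocks_zero₂₁]; simp
lemma detEE : (EE (p := p) (r := r) (S := S)).det = 1 := by
  rw [EE, det_fromBlocks_zero₁₂, detE1]; simp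
lemma detFF : (FF (p := p) (r := r) (S := S)).det = 1 := by
  rw [FF, det_fromBlocks_zero₂₁, detF1]; simp

variable (D1 : Matrix (Fin p) (Fin p) S) (u1 w1 : Fin p → S)
variable (D2 : Matrix (Fin r) (Fin r) S) (u2 w2 : Fin r → S) (x : S)

lemma conj1 :
    E1 * (fromBlocks D1 (colV u1) (rowV w1) 0 + x • ones _ _) * F1
      = fromBlocks (Matrix.of fun i j => D1 i j - u1 i - w1 j) (colV u1) (rowV w1)
          (Matrix.of fun _ _ => x) := by
  ext a b
  rcases a with i | i0 <;> rcases b with j | j0 <;>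
    simp [E1, F1, ones, colV, rowV, Matrix.mul_apply, Fintype.sum_sum_type,
      Matrix.one_apply, ite_mul, mul_ite, Finset.sum_ite_eq, Finset.sum_ite_eq',
      Finset.sum_add_distrib, Finset.sum_sub_distrib, fromBlocks_apply₁₁,
      fromBlocks_apply₁₂, fromBlocks_apply₂₁, fromBlocks_apply₂₂, Fin.eq_zero] <;> ring

lemma conj2 :
    E2 * (fromBlocks 0 (rowV w2) (colV u2) D2 + x • ones _ _) * F2
      = fromBlocks (Matrix.of fun _ _ => x) (rowV w2) (colV u2)
          (Matrix.of fun k l => D2 k l - u2 k - w2 l) := by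
  ext a b
  rcases a with i0 | k <;> rcases b with j0 | l <;>
    simp [E2, F2, ones, colV, rowV, Matrix.mul_apply, Fintype.sum_sum_type,
      Matrix.one_apply, ite_mul, mul_ite, Finset.sum_ite_eq, Finset.sum_ite_eq',
      Finset.sum_add_distrib, Finset.sum_sub_distrib, fromBlocks_apply₁₁,
      fromBlocks_apply₁₂, fromBlocks_apply₂₁, fromBlocks_apply₂₂, Fin.eq_zero] <;> ring

lemma conjD :
    EE * ((fromBlocks
          (fromBlocks D1 (colV u1) (rowV w1) (0 : Matrix (Fin 1) (Fin 1) S))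
          (fromRows (Matrix.of fun i j => u1 i + w2 j) (rowV w2))
          (fromCols (Matrix.of fun i j => u2 i + w1 j) (colV u2))
          D2) + x • ones _ _) * FF
      = fromBlocks
          (fromBlocks (Matrix.of fun i j => D1 i j - u1 i - w1 j) (colV u1) (rowV w1)
            (Matrix.of fun _ _ => x))
          (fromRows 0 (rowV w2))
          (fromCols 0 (colV u2))
          (Matrix.of fun k l => D2 k l - u2 k - w2 l) := by
  ext a b
  rcases a with (i | i0) | k <;> rcases b with (j | j0) | l <;>
    simp [EE, FF, E1, F1, ones, colV, rowV, Matrix.mul_apply, Fintype.sum_sum_type,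
      Matrix.one_apply, ite_mul, mul_ite, Finset.sum_ite_eq, Finset.sum_ite_eq',
      Finset.sum_add_distrib, Finset.sum_sub_distrib, fromBlocks_apply₁₁,
      fromBlocks_apply₁₂, fromBlocks_apply₂₁, fromBlocks_apply₂₂,
      Matrix.fromRows_apply_inl, Matrix.fromRows_apply_inr, Matrix.fromCols_apply_inl, Matrix.fromCols_apply_inr, Fin.eq_zero] <;> ring

end BlockOps

section Arrow

variable {S : Type*} [CommRing S] {p r : ℕ}
variable (A : Matrix (Fin p) (Fin p) S) (u1 w1 : Fin p → S)
variable (B : Matrix (Fin r) (Fin r) S) (u2 w2 : Fin r → S) (x : S)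

lemma detP :
    (fromBlocks A (colV u1) (rowV w1) (Matrix.of fun _ _ => x)).det
      = x * A.det + (fromBlocks A (colV u1) (rowV w1) 0).det := by
  set M := fromBlocks A (colV u1) (rowV w1) (0 : Matrix (Fin 1) (Fin 1) S) with hM
  have h1 : fromBlocks A (colV u1) (rowV w1) (Matrix.of fun _ _ => x)
      = M.updateRow (Sum.inr 0) (x • (Pi.single (Sum.inr 0) 1 : (Fin p ⊕ Fin 1) → S) + M (Sum.inr 0)) := by
    ext a b
    rcases a with i | i0 <;> rcases b with j | j0 <;>
      simp [hM, Matrix.updateRow_apply, Pi.single_apply, colV, rowV, Fin.eq_zero]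
  rw [h1, Matrix.det_updateRow_add, Matrix.det_updateRow_smul, Matrix.updateRow_eq_self]
  congr 1
  have h2 : M.updateRow (Sum.inr 0) ((Pi.single (Sum.inr 0) 1 : (Fin p ⊕ Fin 1) → S))
      = fromBlocks A (colV u1) 0 1 := by
    ext a b
    rcases a with i | i0 <;> rcases b with j | j0 <;>
      simp [hM, Matrix.updateRow_apply, Pi.single_apply, colV, rowV, Fin.eq_zero,
        Matrix.one_apply]
  rw [h2, det_fromBlocks_zero₂₁]
  simp

lemma detQ :
    (fromBlocks (Matrix.of fun _ _ => x) (rowV w2) (colV u2) B).det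
      = x * B.det + (fromBlocks 0 (rowV w2) (colV u2) B).det := by
  set M := fromBlocks (0 : Matrix (Fin 1) (Fin 1) S) (rowV w2) (colV u2) B with hM
  have h1 : fromBlocks (Matrix.of fun _ _ => x) (rowV w2) (colV u2) B
      = M.updateRow (Sum.inl 0) (x • (Pi.single (Sum.inl 0) 1 : (Fin 1 ⊕ Fin r) → S) + M (Sum.inl 0)) := by
    ext a b
    rcases a with i0 | k <;> rcases b with j0 | l <;>
      simp [hM, Matrix.updateRow_apply, Pi.single_apply, colV, rowV, Fin.eq_zero]
  rw [h1, Matrix.det_updateRow_add, Matrix.det_updateRow_smul, Matrix.updateRow_eq_self]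
  congr 1
  have h2 : M.updateRow (Sum.inl 0) ((Pi.single (Sum.inl 0) 1 : (Fin 1 ⊕ Fin r) → S))
      = fromBlocks 1 0 (colV u2) B := by
    ext a b
    rcases a with i0 | k <;> rcases b with j0 | l <;>
      simp [hM, Matrix.updateRow_apply, Pi.single_apply, colV, rowV, Fin.eq_zero,
        Matrix.one_apply]
  rw [h2, det_fromBlocks_zero₁₂]
  simp

/-- The arrowhead matrix. -/
def TT (y : S) : Matrix ((Fin p ⊕ Fin 1) ⊕ Fin r) ((Fin p ⊕ Fin 1) ⊕ Fin r) S :=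
  fromBlocks (fromBlocks A (colV u1) (rowV w1) (Matrix.of fun _ _ => y))
    (fromRows 0 (rowV w2)) (fromCols 0 (colV u2)) B

lemma detT :
    (TT A u1 w1 B u2 w2 x).det
      = x * (A.det * B.det)
        + ((fromBlocks A (colV u1) (rowV w1) 0).det * B.det
            + A.det * (fromBlocks 0 (rowV w2) (colV u2) B).det) := by
  have h1 : TT A u1 w1 B u2 w2 x
      = (TT A u1 w1 B u2 w2 0).updateRow (Sum.inl (Sum.inr 0))
          (x • (Pi.single (Sum.inl (Sum.inr 0)) 1 : ((Fin p ⊕ Fin 1) ⊕ Fin r) → S) + (TT A u1 w1 B u2 w2 0) (Sum.inl (Sum.inr 0))) := by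
    ext a b
    rcases a with (i | i0) | k <;> rcases b with (j | j0) | l <;>
      simp [TT, Matrix.updateRow_apply, Pi.single_apply, colV, rowV, Fin.eq_zero,
        Matrix.fromRows, Matrix.fromCols]
  rw [h1, Matrix.det_updateRow_add, Matrix.det_updateRow_smul, Matrix.updateRow_eq_self]
  have h2 : (TT A u1 w1 B u2 w2 0).updateRow (Sum.inl (Sum.inr 0))
        ((Pi.single (Sum.inl (Sum.inr 0)) 1 : ((Fin p ⊕ Fin 1) ⊕ Fin r) → S))
      = fromBlocks (fromBlocks A (colV u1) 0 1) 0 (fromCols 0 (colV u2)) B := by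
    ext a b
    rcases a with (i | i0) | k <;> rcases b with (j | j0) | l <;>
      simp [TT, Matrix.updateRow_apply, Pi.single_apply, colV, rowV, Fin.eq_zero,
        Matrix.fromRows_apply_inl, Matrix.fromRows_apply_inr, Matrix.fromCols_apply_inl, Matrix.fromCols_apply_inr, Matrix.one_apply]
  rw [h2, det_fromBlocks_zero₁₂, det_fromBlocks_zero₂₁, det_one, mul_one]
  congr 1
  have h3 : (TT A u1 w1 B u2 w2 0) (Sum.inl (Sum.inr 0))
      = (Sum.elim (Sum.elim w1 (fun _ => (0:S))) (fun _ => (0:S)))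
        + Sum.elim (fun _ => (0:S)) w2 := by
    ext b
    rcases b with (j | j0) | l <;>
      simp [TT, colV, rowV, Fin.eq_zero, Matrix.fromRows_apply_inl, Matrix.fromRows_apply_inr, Matrix.fromCols_apply_inl, Matrix.fromCols_apply_inr]
  have h4 : TT A u1 w1 B u2 w2 0
      = (TT A u1 w1 B u2 w2 0).updateRow (Sum.inl (Sum.inr 0))
          ((Sum.elim (Sum.elim w1 (fun _ => (0:S))) (fun _ => (0:S))) + Sum.elim (fun _ => (0:S)) w2) := by
    rw [← h3, Matrix.updateRow_eq_self]
  rw [h4, Matrix.det_updateRow_add]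
  congr 1
  · have h5 : (TT A u1 w1 B u2 w2 0).updateRow (Sum.inl (Sum.inr 0))
          (Sum.elim (Sum.elim w1 (fun _ => (0:S))) (fun _ => (0:S)))
        = fromBlocks (fromBlocks A (colV u1) (rowV w1) 0) 0 (fromCols 0 (colV u2)) B := by
      ext a b
      rcases a with (i | i0) | k <;> rcases b with (j | j0) | l <;>
        simp [TT, Matrix.updateRow_apply, colV, rowV, Fin.eq_zero,
          Matrix.fromRows_apply_inl, Matrix.fromRows_apply_inr, Matrix.fromCols_apply_inl, Matrix.fromCols_apply_inr]
    rw [h5, det_fromBlocks_zero₁₂]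
  · have h6 : ((TT A u1 w1 B u2 w2 0).updateRow (Sum.inl (Sum.inr 0))
          (Sum.elim (fun _ => (0:S)) w2)).submatrix (Equiv.sumAssoc (Fin p) (Fin 1) (Fin r)).symm
            (Equiv.sumAssoc (Fin p) (Fin 1) (Fin r)).symm
        = fromBlocks A (fromCols (colV u1) 0) 0
            (fromBlocks 0 (rowV w2) (colV u2) B) := by
      ext a b
      rcases a with i | (i0 | k) <;> rcases b with j | (j0 | l) <;>
        simp [TT, Matrix.updateRow_apply, colV, rowV, Fin.eq_zero, Equiv.sumAssoc,
          Matrix.fromRows_apply_inl, Matrix.fromRows_apply_inr, Matrix.fromCols_apply_inl, Matrix.fromCols_apply_inr]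
    rw [← Matrix.det_submatrix_equiv_self (Equiv.sumAssoc (Fin p) (Fin 1) (Fin r)).symm, h6,
      det_fromBlocks_zero₂₁]

end Arrow

section Key

variable {S : Type*} [CommRing S] {p r : ℕ}
variable (D1 : Matrix (Fin p) (Fin p) S) (u1 w1 : Fin p → S)
variable (D2 : Matrix (Fin r) (Fin r) S) (u2 w2 : Fin r → S)

lemma key (x : S) :
    x * ((fromBlocks
          (fromBlocks D1 (colV u1) (rowV w1) (0 : Matrix (Fin 1) (Fin 1) S))
          (fromRows (Matrix.of fun i j => u1 i + w2 j) (rowV w2))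
          (fromCols (Matrix.of fun i j => u2 i + w1 j) (colV u2))
          D2) + x • ones _ _).det
      = (fromBlocks D1 (colV u1) (rowV w1) 0 + x • ones _ _).det
          * (fromBlocks 0 (rowV w2) (colV u2) D2 + x • ones _ _).det
        - (fromBlocks D1 (colV u1) (rowV w1) 0).det
          * (fromBlocks 0 (rowV w2) (colV u2) D2).det := by
  set A := (Matrix.of fun i j => D1 i j - u1 i - w1 j : Matrix (Fin p) (Fin p) S) with hA
  set B := (Matrix.of fun k l => D2 k l - u2 k - w2 l : Matrix (Fin r) (Fin r) S) with hB
  have e1 : ∀ y : S, (fromBlocks D1 (colV u1) (rowV w1) 0 + y • ones _ _).det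
      = y * A.det + (fromBlocks A (colV u1) (rowV w1) 0).det := by
    intro y
    have hd := congrArg Matrix.det (conj1 D1 u1 w1 y)
    rw [Matrix.det_mul, Matrix.det_mul, detE1, detF1, one_mul, mul_one] at hd
    rw [hd, detP]
  have e2 : ∀ y : S, (fromBlocks 0 (rowV w2) (colV u2) D2 + y • ones _ _).det
      = y * B.det + (fromBlocks 0 (rowV w2) (colV u2) B).det := by
    intro y
    have hd := congrArg Matrix.det (conj2 D2 u2 w2 y)
    rw [Matrix.det_mul, Matrix.det_mul, detE2, detF2, one_mul, mul_one] at hd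
    rw [hd, detQ]
  have e1' : (fromBlocks D1 (colV u1) (rowV w1) 0).det
      = (fromBlocks A (colV u1) (rowV w1) 0).det := by
    have := e1 0; simpa using this
  have e2' : (fromBlocks 0 (rowV w2) (colV u2) D2).det
      = (fromBlocks 0 (rowV w2) (colV u2) B).det := by
    have := e2 0; simpa using this
  have eD : ((fromBlocks
          (fromBlocks D1 (colV u1) (rowV w1) (0 : Matrix (Fin 1) (Fin 1) S))
          (fromRows (Matrix.of fun i j => u1 i + w2 j) (rowV w2))
          (fromCols (Matrix.of fun i j => u2 i + w1 j) (colV u2))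
          D2) + x • ones _ _).det
      = x * (A.det * B.det)
        + ((fromBlocks A (colV u1) (rowV w1) 0).det * B.det
            + A.det * (fromBlocks 0 (rowV w2) (colV u2) B).det) := by
    have hd := congrArg Matrix.det (conjD D1 u1 w1 D2 u2 w2 x)
    rw [Matrix.det_mul, Matrix.det_mul, detEE, detFF, one_mul, mul_one] at hd
    rw [hd]
    exact detT A u1 w1 B u2 w2 x
  rw [eD, e1 x, e2 x, e1', e2']
  ring

end Key
section Final

lemma poly_extract {R : Type*} [CommRing R] {a0 b0 a1 b1 a2 b2 : R}
    (h : (X : R[X]) * (C a0 + X * C b0)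
        = (C a1 + X * C b1) * (C a2 + X * C b2) - C a1 * C a2) :
    b0 = b1 * b2 ∧ a0 = a1 * b2 + b1 * a2 := by
  have h' : (C a0) * X + (C b0) * X ^ 2
      = (C (a1 * b2 + b1 * a2)) * X + (C (b1 * b2)) * X ^ 2 := by
    simp only [map_add, _root_.map_mul]
    linear_combination h
  constructor
  · have h2 := congrArg (fun q => q.coeff 2) h'
    simpa [Polynomial.coeff_C_mul, Polynomial.coeff_X_pow, Polynomial.coeff_X, mul_assoc] using h2
  · have h1 := congrArg (fun q => q.coeff 1) h'
    simpa [Polynomial.coeff_C_mul, Polynomial.coeff_X_pow, Polynomial.coeff_X, mul_assoc] using h1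

/-- The classical Graham–Hoffman–Hosoya identities in the single-cut-vertex case:
for the additive distance matrix `D = [[D1, u1, C], [w1ᵀ, 0, w2ᵀ], [C', u2, D2]]`
with cross blocks `C i j = u1 i + w2 j` and `C' i j = u2 i + w1 j`, and the blocks
`M1 = [[D1, u1], [w1ᵀ, 0]]`, `M2 = [[0, w2ᵀ], [u2, D2]]`, one has
`cof(D) = cof(M1)·cof(M2)` and `det(D) = det(M1)·cof(M2) + cof(M1)·det(M2)`. -/
theorem stmt_6 {R : Type*} [CommRing R] {p r : ℕ}
    (D1 : Matrix (Fin p) (Fin p) R) (u1 w1 : Fin p → R)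
    (D2 : Matrix (Fin r) (Fin r) R) (u2 w2 : Fin r → R) :
    cofSum ((Matrix.reindex (toFin3 p r) (toFin3 p r))
        (Matrix.fromBlocks
          (Matrix.fromBlocks D1 (colV u1) (rowV w1) (0 : Matrix (Fin 1) (Fin 1) R))
          (Matrix.fromRows (Matrix.of fun i j => u1 i + w2 j) (rowV w2))
          (Matrix.fromCols (Matrix.of fun i j => u2 i + w1 j) (colV u2))
          D2))
      = cofSum ((Matrix.reindex finSumFinEquiv finSumFinEquiv)
            (Matrix.fromBlocks D1 (colV u1) (rowV w1) (0 : Matrix (Fin 1) (Fin 1) R)))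
        * cofSum ((Matrix.reindex finSumFinEquiv finSumFinEquiv)
            (Matrix.fromBlocks (0 : Matrix (Fin 1) (Fin 1) R) (rowV w2) (colV u2) D2))
    ∧ (Matrix.fromBlocks
          (Matrix.fromBlocks D1 (colV u1) (rowV w1) (0 : Matrix (Fin 1) (Fin 1) R))
          (Matrix.fromRows (Matrix.of fun i j => u1 i + w2 j) (rowV w2))
          (Matrix.fromCols (Matrix.of fun i j => u2 i + w1 j) (colV u2))
          D2).det
      = (Matrix.fromBlocks D1 (colV u1) (rowV w1) (0 : Matrix (Fin 1) (Fin 1) R)).det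
          * cofSum ((Matrix.reindex finSumFinEquiv finSumFinEquiv)
              (Matrix.fromBlocks (0 : Matrix (Fin 1) (Fin 1) R) (rowV w2) (colV u2) D2))
        + cofSum ((Matrix.reindex finSumFinEquiv finSumFinEquiv)
              (Matrix.fromBlocks D1 (colV u1) (rowV w1) (0 : Matrix (Fin 1) (Fin 1) R)))
          * (Matrix.fromBlocks (0 : Matrix (Fin 1) (Fin 1) R) (rowV w2) (colV u2) D2).det := by
  classical
  have hk := key (D1.map (C : R → R[X])) (fun i => (C (u1 i) : R[X])) (fun i => (C (w1 i) : R[X]))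
    (D2.map (C : R → R[X])) (fun i => (C (u2 i) : R[X])) (fun i => (C (w2 i) : R[X])) (X : R[X])
  have h1 : fromBlocks (D1.map (C : R → R[X])) (colV fun i => (C (u1 i) : R[X]))
        (rowV fun i => (C (w1 i) : R[X])) 0
      = (fromBlocks D1 (colV u1) (rowV w1) (0 : Matrix (Fin 1) (Fin 1) R)).map (C : R → R[X]) := by
    ext a b
    rcases a with i | i0 <;> rcases b with j | j0 <;>
      simp [colV, rowV, Matrix.map_apply]
  have h2 : fromBlocks 0 (rowV fun i => (C (w2 i) : R[X])) (colV fun i => (C (u2 i) : R[X]))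
        (D2.map (C : R → R[X]))
      = (fromBlocks (0 : Matrix (Fin 1) (Fin 1) R) (rowV w2) (colV u2) D2).map (C : R → R[X]) := by
    ext a b
    rcases a with i0 | k <;> rcases b with j0 | l <;>
      simp [colV, rowV, Matrix.map_apply]
  have hD : fromBlocks
        (fromBlocks (D1.map (C : R → R[X])) (colV fun i => (C (u1 i) : R[X]))
          (rowV fun i => (C (w1 i) : R[X])) (0 : Matrix (Fin 1) (Fin 1) R[X]))
        (fromRows (Matrix.of fun i j => (C (u1 i) : R[X]) + C (w2 j)) (rowV fun i => (C (w2 i) : R[X])))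
        (fromCols (Matrix.of fun i j => (C (u2 i) : R[X]) + C (w1 j)) (colV fun i => (C (u2 i) : R[X])))
        (D2.map (C : R → R[X]))
      = (fromBlocks
          (fromBlocks D1 (colV u1) (rowV w1) (0 : Matrix (Fin 1) (Fin 1) R))
          (fromRows (Matrix.of fun i j => u1 i + w2 j) (rowV w2))
          (fromCols (Matrix.of fun i j => u2 i + w1 j) (colV u2))
          D2).map (C : R → R[X]) := by
    ext a b
    rcases a with (i | i0) | k <;> rcases b with (j | j0) | l <;>
      simp [colV, rowV, Matrix.map_apply, Matrix.fromRows_apply_inl, Matrix.fromRows_apply_inr, Matrix.fromCols_apply_inl, Matrix.fromCols_apply_inr]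
  rw [hD, h1, h2] at hk
  rw [det_add_smul_ones, det_add_smul_ones, det_add_smul_ones] at hk
  have dmapD : ((fromBlocks
          (fromBlocks D1 (colV u1) (rowV w1) (0 : Matrix (Fin 1) (Fin 1) R))
          (fromRows (Matrix.of fun i j => u1 i + w2 j) (rowV w2))
          (fromCols (Matrix.of fun i j => u2 i + w1 j) (colV u2))
          D2).map (C : R → R[X])).det
      = C ((fromBlocks
          (fromBlocks D1 (colV u1) (rowV w1) (0 : Matrix (Fin 1) (Fin 1) R))
          (fromRows (Matrix.of fun i j => u1 i + w2 j) (rowV w2))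
          (fromCols (Matrix.of fun i j => u2 i + w1 j) (colV u2))
          D2).det) := by
    rw [RingHom.map_det]; rfl
  have dmap1 : (((fromBlocks D1 (colV u1) (rowV w1) (0 : Matrix (Fin 1) (Fin 1) R))).map
        (C : R → R[X])).det
      = C ((fromBlocks D1 (colV u1) (rowV w1) (0 : Matrix (Fin 1) (Fin 1) R)).det) := by
    rw [RingHom.map_det]; rfl
  have dmap2 : (((fromBlocks (0 : Matrix (Fin 1) (Fin 1) R) (rowV w2) (colV u2) D2)).map
        (C : R → R[X])).det
      = C ((fromBlocks (0 : Matrix (Fin 1) (Fin 1) R) (rowV w2) (colV u2) D2).det) := by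
    rw [RingHom.map_det]; rfl
  rw [dmapD, dmap1, dmap2, Cof_map (C : R →+* R[X]), Cof_map (C : R →+* R[X]),
    Cof_map (C : R →+* R[X])] at hk
  obtain ⟨hI, hII⟩ := poly_extract hk
  constructor
  · rw [Matrix.reindex_apply, Matrix.reindex_apply, Matrix.reindex_apply,
      cofSum_eq_Cof, cofSum_eq_Cof, cofSum_eq_Cof, Cof_submatrix, Cof_submatrix, Cof_submatrix]
    exact hI
  · rw [Matrix.reindex_apply, Matrix.reindex_apply,
      cofSum_eq_Cof, cofSum_eq_Cof, Cof_submatrix, Cof_submatrix]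
    exact hII

end Final
end

section
/- Let R be a commutative unital ring and let p, r ≥ 0. Let D1 be a p×p matrix, u1, w1, m1 ∈ R^p, D2 an r×r matrix, u2, w2, m2 ∈ R^r. Form the (p+1+r)×(p+1+r) block matrix D = [[D1, u1, u1·eᵀ + m1·w2ᵀ], [w1ᵀ, 0, w2ᵀ], [u2·eᵀ + m2·w1ᵀ, u2, D2]]. Set M1 = [[D1, u1], [w1ᵀ, 0]], M2 = [[0, w2ᵀ], [u2, D2]], κ1 := det(D1 − u1·eᵀ − m1·w1ᵀ), and κ2 := det(D2 − u2·eᵀ − m2·w2ᵀ). Then: (i) κ(D, v_0) := det( D₀ − u·eᵀ − m·wᵀ ) equals κ1·κ2, where v_0 is the middle index, D₀ is D with the middle row and column deleted, u = (u1; u2), w = (w1; w2), m = (m1; m2); (ii) det(D) = det(M1)·κ2 + κ1·det(M2); (iii) cof(D) = κ1·κ2 + (cof(M1) − κ1)·κ2 + κ1·(cof(M2) − κ2). -/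
section Lemmas

variable {R : Type*} [CommRing R] {ι : Type*} [DecidableEq ι] [Fintype ι]

lemma det_rowops (D : Matrix ι ι R) (m : ι) (x : ι → R) (hx : x m = 0) :
    (Matrix.of fun i j => D i j + x i * D m j).det = D.det := by
  suffices h : ∀ s : Finset ι, m ∉ s →
      (Matrix.of fun i j => D i j + (if i ∈ s then x i else 0) * D m j).det = D.det by
    have := h (Finset.univ.erase m) (Finset.notMem_erase m _)
    rw [← this]
    congr 1
    ext i j
    by_cases hi : i = m
    · subst hi; simp [hx]
    · simp [Finset.mem_erase, hi]
  intro s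
  induction s using Finset.induction_on with
  | empty => intro _; congr 1; ext i j; simp
  | @insert a s ha ih =>
    intro hm
    have hma : a ≠ m := fun h => hm (by simp [h])
    have hms : m ∉ s := fun h => hm (Finset.mem_insert_of_mem h)
    have key : (Matrix.of fun i j => D i j + (if i ∈ insert a s then x i else 0) * D m j)
        = Matrix.updateRow (Matrix.of fun i j => D i j + (if i ∈ s then x i else 0) * D m j) a
          ((Matrix.of fun i j => D i j + (if i ∈ s then x i else 0) * D m j) a
            + x a • (Matrix.of fun i j => D i j + (if i ∈ s then x i else 0) * D m j) m) := by
      ext i j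
      by_cases hi : i = a
      · subst hi
        simp [Matrix.updateRow_self, ha, if_neg hms, if_neg ha]
      · rw [Matrix.updateRow_ne hi]
        simp [Finset.mem_insert, hi]
    rw [key, Matrix.det_updateRow_add_smul_self _ hma, ih hms]

lemma det_colops (D : Matrix ι ι R) (m : ι) (y : ι → R) (hy : y m = 0) :
    (Matrix.of fun i j => D i j + D i m * y j).det = D.det := by
  rw [← Matrix.det_transpose, ← Matrix.det_transpose D]
  rw [← det_rowops D.transpose m y hy]
  congr 1
  ext i j
  simp [Matrix.transpose_apply, mul_comm]

lemma det_ops (D : Matrix ι ι R) (m : ι) (x y : ι → R) (hx : x m = 0) (hy : y m = 0) :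
    (Matrix.of fun i j => D i j + x i * D m j + (D i m + x i * D m m) * y j).det = D.det := by
  have h1 := det_rowops D m x hx
  rw [← h1, ← det_colops (Matrix.of fun i j => D i j + x i * D m j) m y hy]
  congr 1

lemma det_add_ones (A : Matrix ι ι R) :
    (Matrix.of fun i j => A i j + 1).det
      = A.det + ∑ i, (A.updateRow i (fun _ => 1)).det := by
  classical
  have h0 : (Matrix.of fun i j => A i j + 1) = (A + Matrix.of fun _ _ => 1) := by
    ext i j; simp
  rw [h0]
  have hadd : (A + Matrix.of fun _ _ => (1:R)).det
      = ∑ s : Finset ι,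
          Matrix.det (Matrix.of (s.piecewise (A : ι → ι → R) (Matrix.of fun _ _ => (1:R)))) :=
    Matrix.detRowAlternating.toMultilinearMap.map_add_univ A _
  rw [hadd]
  set g : Finset ι → R := fun s =>
    Matrix.det (Matrix.of (s.piecewise (A : ι → ι → R) (Matrix.of fun _ _ => (1:R)))) with hg
  have hzero : ∀ s : Finset ι,
      ¬ (s = Finset.univ ∨ ∃ i, s = Finset.univ.erase i) → g s = 0 := by
    intro s hs
    push_neg at hs
    obtain ⟨hsu, hse⟩ := hs
    obtain ⟨i, hi⟩ : ∃ i, i ∉ s := by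
      by_contra h
      push_neg at h
      exact hsu (Finset.eq_univ_iff_forall.2 h)
    obtain ⟨j, hji, hj⟩ : ∃ j, j ≠ i ∧ j ∉ s := by
      by_contra h
      push_neg at h
      refine hse i (Finset.ext fun k => ?_)
      simp only [Finset.mem_erase, Finset.mem_univ, and_true]
      constructor
      · intro hk; rintro rfl; exact hi hk
      · intro hk; exact h k hk
    refine Matrix.det_zero_of_row_eq hji ?_
    funext k
    simp [Finset.piecewise, hi, hj]
  have hfil : ∀ s ∈ (Finset.univ : Finset (Finset ι)), g s ≠ 0 →
      (s = Finset.univ ∨ ∃ i, s = Finset.univ.erase i) := by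
    intro s _ hgs
    by_contra h
    exact hgs (hzero s h)
  rw [← Finset.sum_filter_of_ne hfil]
  have hset : (Finset.univ.filter
        (fun s => s = Finset.univ ∨ ∃ i, s = Finset.univ.erase i))
      = insert Finset.univ ((Finset.univ : Finset ι).image
          fun i => Finset.univ.erase i) := by
    ext s
    simp [eq_comm]
  rw [hset]
  have hnotmem : (Finset.univ : Finset ι) ∉
      (Finset.univ : Finset ι).image (fun i => Finset.univ.erase i) := by
    simp only [Finset.mem_image, Finset.mem_univ, true_and]
    rintro ⟨i, hi⟩
    have : i ∈ Finset.univ.erase i := hi.symm ▸ Finset.mem_univ i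
    exact (Finset.notMem_erase i _) this
  rw [Finset.sum_insert hnotmem]
  congr 1
  · rw [hg]; simp only [Finset.piecewise_univ]; congr 1; ext k j; simp [Finset.piecewise]
  · rw [Finset.sum_image ?hinj]
    case hinj =>
      intro i _ j _ h
      by_contra hij
      have h1 : i ∈ Finset.univ.erase j := Finset.mem_erase.2 ⟨hij, Finset.mem_univ i⟩
      rw [← show Finset.univ.erase i = Finset.univ.erase j from h] at h1
      exact Finset.notMem_erase i _ h1
    refine Finset.sum_congr rfl fun i _ => ?_
    rw [hg]
    have hmat : (Matrix.of ((Finset.univ.erase i).piecewise (A : ι → ι → R)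
        (Matrix.of fun _ _ => (1:R)))) = A.updateRow i (fun _ => 1) := by
      ext k j
      by_cases hk : k = i
      · subst hk; simp [Finset.piecewise]
      · simp [Finset.piecewise, hk, Matrix.updateRow_ne hk]
    exact congrArg Matrix.det hmat

lemma cofSum_eq {n : ℕ} (A : Matrix (Fin n) (Fin n) R) :
    cofSum A = (Matrix.of fun i j => A i j + 1).det - A.det := by
  cases n with
  | zero => simp [cofSum, Matrix.det_fin_zero]
  | succ m =>
    rw [det_add_ones]
    have : ∑ i, (A.updateRow i (fun _ => 1)).det
        = ∑ i : Fin (m+1), ∑ j : Fin (m+1),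
            (-1:R)^((i:ℕ)+(j:ℕ)) * (A.submatrix i.succAbove j.succAbove).det := by
      refine Finset.sum_congr rfl fun i _ => ?_
      rw [Matrix.det_succ_row _ i]
      refine Finset.sum_congr rfl fun j _ => ?_
      rw [Matrix.submatrix_updateRow_succAbove]
      simp
    rw [this]
    simp [cofSum]

lemma cofSum_reindex {n : ℕ} (e : ι ≃ Fin n) (M : Matrix ι ι R) :
    cofSum ((Matrix.reindex e e) M) = (Matrix.of fun i j => M i j + 1).det - M.det := by
  have h2 : ((Matrix.reindex e e) M).det = M.det := Matrix.det_reindex_self e M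
  have h1 : (Matrix.of fun i j => ((Matrix.reindex e e) M) i j + 1).det
      = (Matrix.of fun i j => M i j + 1).det := by
    rw [← Matrix.det_reindex_self e (Matrix.of fun i j => M i j + 1)]
    congr 1
  rw [cofSum_eq, h1, h2]

end Lemmas

section Main

variable {R : Type*} [CommRing R] {p r : ℕ}

lemma detM1 (D1 : Matrix (Fin p) (Fin p) R) (u1 w1 m1 : Fin p → R) :
    (Matrix.fromBlocks (Matrix.of fun i j => D1 i j - u1 i - m1 i * w1 j) (colV u1) (rowV w1)
      (0 : Matrix (Fin 1) (Fin 1) R)).det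
    = (Matrix.fromBlocks D1 (colV u1) (rowV w1) (0 : Matrix (Fin 1) (Fin 1) R)).det := by
  rw [← det_ops (Matrix.fromBlocks D1 (colV u1) (rowV w1) (0 : Matrix (Fin 1) (Fin 1) R))
    (Sum.inr 0) (Sum.elim (fun i => -m1 i) 0) (Sum.elim (fun _ => (-1:R)) 0) rfl rfl]
  congr 1
  ext i j
  rcases i with i | i <;> rcases j with j | j <;>
    simp [colV, rowV, Fin.fin_one_eq_zero, Fin.fin_one_eq_zero] <;> ring

lemma detM2 (D2 : Matrix (Fin r) (Fin r) R) (u2 w2 m2 : Fin r → R) :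
    (Matrix.fromBlocks (0 : Matrix (Fin 1) (Fin 1) R) (rowV w2) (colV u2)
      (Matrix.of fun i j => D2 i j - u2 i - m2 i * w2 j)).det
    = (Matrix.fromBlocks (0 : Matrix (Fin 1) (Fin 1) R) (rowV w2) (colV u2) D2).det := by
  rw [← det_ops (Matrix.fromBlocks (0 : Matrix (Fin 1) (Fin 1) R) (rowV w2) (colV u2) D2)
    (Sum.inl 0) (Sum.elim 0 (fun i => -m2 i)) (Sum.elim 0 (fun _ => (-1:R))) rfl rfl]
  congr 1
  ext i j
  rcases i with i | i <;> rcases j with j | j <;>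
    simp [colV, rowV, Fin.fin_one_eq_zero, Fin.fin_one_eq_zero] <;> ring

lemma detM1J (D1 : Matrix (Fin p) (Fin p) R) (u1 w1 m1 : Fin p → R) :
    (Matrix.of fun i j =>
        (Matrix.fromBlocks D1 (colV u1) (rowV w1) (0 : Matrix (Fin 1) (Fin 1) R)) i j + 1).det
    = (Matrix.fromBlocks (Matrix.of fun i j => D1 i j - u1 i - m1 i * w1 j)
        (colV (fun i => u1 i + 1 - m1 i)) (rowV w1) (1 : Matrix (Fin 1) (Fin 1) R)).det := by
  rw [← det_ops (Matrix.of fun i j =>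
        (Matrix.fromBlocks D1 (colV u1) (rowV w1) (0 : Matrix (Fin 1) (Fin 1) R)) i j + 1)
    (Sum.inr 0) (Sum.elim (fun i => -m1 i) 0) (Sum.elim (fun _ => (-1:R)) 0) rfl rfl]
  congr 1
  ext i j
  rcases i with i | i <;> rcases j with j | j <;>
    simp [colV, rowV, Fin.fin_one_eq_zero, Fin.fin_one_eq_zero, Matrix.one_apply] <;> ring

lemma detM2J (D2 : Matrix (Fin r) (Fin r) R) (u2 w2 m2 : Fin r → R) :
    (Matrix.of fun i j =>
        (Matrix.fromBlocks (0 : Matrix (Fin 1) (Fin 1) R) (rowV w2) (colV u2) D2) i j + 1).det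
    = (Matrix.fromBlocks (1 : Matrix (Fin 1) (Fin 1) R) (rowV w2)
        (colV (fun i => u2 i + 1 - m2 i))
        (Matrix.of fun i j => D2 i j - u2 i - m2 i * w2 j)).det := by
  rw [← det_ops (Matrix.of fun i j =>
        (Matrix.fromBlocks (0 : Matrix (Fin 1) (Fin 1) R) (rowV w2) (colV u2) D2) i j + 1)
    (Sum.inl 0) (Sum.elim 0 (fun i => -m2 i)) (Sum.elim 0 (fun _ => (-1:R))) rfl rfl]
  congr 1
  ext i j
  rcases i with i | i <;> rcases j with j | j <;>
    simp [colV, rowV, Fin.fin_one_eq_zero, Fin.fin_one_eq_zero, Matrix.one_apply] <;> ring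

lemma detSplit (K2 : Matrix (Fin r) (Fin r) R) (w2 v : Fin r → R) :
    (Matrix.fromBlocks (1 : Matrix (Fin 1) (Fin 1) R) (rowV w2) (colV v) K2).det
    = K2.det + (Matrix.fromBlocks (0 : Matrix (Fin 1) (Fin 1) R) (rowV w2) (colV v) K2).det := by
  have h : (Matrix.fromBlocks (1 : Matrix (Fin 1) (Fin 1) R) (rowV w2) (colV v) K2)
      = Matrix.updateRow (Matrix.fromBlocks (0 : Matrix (Fin 1) (Fin 1) R) (rowV w2) (colV v) K2)
          (Sum.inl 0) (Sum.elim (fun _ => (1:R)) (fun _ => (0:R)) + Sum.elim (fun _ => (0:R)) w2) := by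
    ext i j
    rcases i with i | i <;> rcases j with j | j <;>
      simp [Matrix.updateRow_apply, colV, rowV, Fin.fin_one_eq_zero, Fin.fin_one_eq_zero, Matrix.one_apply]
  rw [h, Matrix.det_updateRow_add]
  congr 1
  · have h2 : Matrix.updateRow
        (Matrix.fromBlocks (0 : Matrix (Fin 1) (Fin 1) R) (rowV w2) (colV v) K2)
        (Sum.inl 0) (Sum.elim (fun _ => (1:R)) (fun _ => (0:R)))
        = Matrix.fromBlocks (1 : Matrix (Fin 1) (Fin 1) R) (0 : Matrix (Fin 1) (Fin r) R)
            (colV v) K2 := by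
      ext i j
      rcases i with i | i <;> rcases j with j | j <;>
        simp [Matrix.updateRow_apply, colV, rowV, Fin.fin_one_eq_zero, Fin.fin_one_eq_zero, Matrix.one_apply]
    rw [h2, Matrix.det_fromBlocks_zero₁₂, Matrix.det_one, one_mul]
  · have h3 : (Sum.elim (fun _ => (0:R)) w2 : Fin 1 ⊕ Fin r → R)
        = (Matrix.fromBlocks (0 : Matrix (Fin 1) (Fin 1) R) (rowV w2) (colV v) K2) (Sum.inl 0) := by
      funext j
      rcases j with j | j <;> simp [rowV, Fin.fin_one_eq_zero]
    rw [h3, Matrix.updateRow_eq_self]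

end Main

section Main2

variable {R : Type*} [CommRing R] {p r : ℕ}

lemma detT_s18 (A : Matrix (Fin p) (Fin p) R) (b c : Fin p → R) (d : Matrix (Fin 1) (Fin 1) R)
    (w2 u2v : Fin r → R) (K2 : Matrix (Fin r) (Fin r) R) :
    (Matrix.fromBlocks (Matrix.fromBlocks A (colV b) (rowV c) d)
        (Matrix.fromRows (0 : Matrix (Fin p) (Fin r) R) (rowV w2))
        (Matrix.fromCols (0 : Matrix (Fin r) (Fin p) R) (colV u2v)) K2).det
    = (Matrix.fromBlocks A (colV b) (rowV c) d).det * K2.det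
      + A.det * (Matrix.fromBlocks (0 : Matrix (Fin 1) (Fin 1) R) (rowV w2)
          (colV u2v) K2).det := by
  set T := Matrix.fromBlocks (Matrix.fromBlocks A (colV b) (rowV c) d)
        (Matrix.fromRows (0 : Matrix (Fin p) (Fin r) R) (rowV w2))
        (Matrix.fromCols (0 : Matrix (Fin r) (Fin p) R) (colV u2v)) K2 with hT
  have hrow : T = Matrix.updateRow T (Sum.inl (Sum.inr 0))
      (Sum.elim (Sum.elim c (fun _ => d 0 0)) (fun _ => (0:R))
        + Sum.elim (Sum.elim (fun _ => (0:R)) (fun _ => (0:R))) w2) := by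
    rw [show (Sum.elim (Sum.elim c (fun _ => d 0 0)) (fun _ => (0:R))
        + Sum.elim (Sum.elim (fun _ => (0:R)) (fun _ => (0:R))) w2 : _ → R)
        = T (Sum.inl (Sum.inr 0)) from ?_]
    · rw [Matrix.updateRow_eq_self]
    · funext j
      rcases j with (j | j) | j <;>
        simp [hT, colV, rowV, Fin.fin_one_eq_zero]
  rw [hrow, Matrix.det_updateRow_add]
  congr 1
  · have h2 : Matrix.updateRow T (Sum.inl (Sum.inr 0))
        (Sum.elim (Sum.elim c (fun _ => d 0 0)) (fun _ => (0:R)))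
        = Matrix.fromBlocks (Matrix.fromBlocks A (colV b) (rowV c) d)
            (0 : Matrix (Fin p ⊕ Fin 1) (Fin r) R)
            (Matrix.fromCols (0 : Matrix (Fin r) (Fin p) R) (colV u2v)) K2 := by
      ext i j
      rcases i with (i | i) | i <;> rcases j with (j | j) | j <;>
        simp [hT, Matrix.updateRow_apply, colV, rowV, Fin.fin_one_eq_zero, Fin.fin_one_eq_zero]
    rw [h2, Matrix.det_fromBlocks_zero₁₂]
  · have h3 : Matrix.updateRow T (Sum.inl (Sum.inr 0))
        (Sum.elim (Sum.elim (fun _ => (0:R)) (fun _ => (0:R))) w2)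
        = (Matrix.fromBlocks A
            (Matrix.fromCols (colV b) (0 : Matrix (Fin p) (Fin r) R))
            (0 : Matrix (Fin 1 ⊕ Fin r) (Fin p) R)
            (Matrix.fromBlocks (0 : Matrix (Fin 1) (Fin 1) R) (rowV w2)
              (colV u2v) K2)).submatrix
          (Equiv.sumAssoc (Fin p) (Fin 1) (Fin r)) (Equiv.sumAssoc (Fin p) (Fin 1) (Fin r)) := by
      ext i j
      rcases i with (i | i) | i <;> rcases j with (j | j) | j <;>
        simp [hT, Matrix.updateRow_apply, colV, rowV, Fin.fin_one_eq_zero, Fin.fin_one_eq_zero]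
    rw [h3, Matrix.det_submatrix_equiv_self, Matrix.det_fromBlocks_zero₂₁]

end Main2

section Main3

variable {R : Type*} [CommRing R] {p r : ℕ}

lemma detDeq (D1 : Matrix (Fin p) (Fin p) R) (u1 w1 m1 : Fin p → R)
    (D2 : Matrix (Fin r) (Fin r) R) (u2 w2 m2 : Fin r → R) :
    (Matrix.fromBlocks
        (Matrix.fromBlocks D1 (colV u1) (rowV w1) (0 : Matrix (Fin 1) (Fin 1) R))
        (Matrix.fromRows (Matrix.of fun i j => u1 i + m1 i * w2 j) (rowV w2))
        (Matrix.fromCols (Matrix.of fun i j => u2 i + m2 i * w1 j) (colV u2)) D2).det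
    = (Matrix.fromBlocks (Matrix.of fun i j => D1 i j - u1 i - m1 i * w1 j) (colV u1)
        (rowV w1) (0 : Matrix (Fin 1) (Fin 1) R)).det
      * (Matrix.of fun i j => D2 i j - u2 i - m2 i * w2 j).det
      + (Matrix.of fun i j => D1 i j - u1 i - m1 i * w1 j).det
      * (Matrix.fromBlocks (0 : Matrix (Fin 1) (Fin 1) R) (rowV w2) (colV u2)
          (Matrix.of fun i j => D2 i j - u2 i - m2 i * w2 j)).det := by
  rw [← det_ops (Matrix.fromBlocks
        (Matrix.fromBlocks D1 (colV u1) (rowV w1) (0 : Matrix (Fin 1) (Fin 1) R))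
        (Matrix.fromRows (Matrix.of fun i j => u1 i + m1 i * w2 j) (rowV w2))
        (Matrix.fromCols (Matrix.of fun i j => u2 i + m2 i * w1 j) (colV u2)) D2)
      (Sum.inl (Sum.inr 0))
      (Sum.elim (Sum.elim (fun i => -m1 i) (fun _ => (0:R))) (fun i => -m2 i))
      (Sum.elim (Sum.elim (fun _ => (-1:R)) (fun _ => (0:R))) (fun _ => (-1:R))) rfl rfl]
  have hmat : (Matrix.of fun i j =>
      (Matrix.fromBlocks
        (Matrix.fromBlocks D1 (colV u1) (rowV w1) (0 : Matrix (Fin 1) (Fin 1) R))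
        (Matrix.fromRows (Matrix.of fun i j => u1 i + m1 i * w2 j) (rowV w2))
        (Matrix.fromCols (Matrix.of fun i j => u2 i + m2 i * w1 j) (colV u2)) D2) i j
      + (Sum.elim (Sum.elim (fun i => -m1 i) (fun _ => (0:R))) (fun i => -m2 i)) i
        * (Matrix.fromBlocks
            (Matrix.fromBlocks D1 (colV u1) (rowV w1) (0 : Matrix (Fin 1) (Fin 1) R))
            (Matrix.fromRows (Matrix.of fun i j => u1 i + m1 i * w2 j) (rowV w2))
            (Matrix.fromCols (Matrix.of fun i j => u2 i + m2 i * w1 j) (colV u2)) D2)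
            (Sum.inl (Sum.inr 0)) j
      + ((Matrix.fromBlocks
            (Matrix.fromBlocks D1 (colV u1) (rowV w1) (0 : Matrix (Fin 1) (Fin 1) R))
            (Matrix.fromRows (Matrix.of fun i j => u1 i + m1 i * w2 j) (rowV w2))
            (Matrix.fromCols (Matrix.of fun i j => u2 i + m2 i * w1 j) (colV u2)) D2) i
            (Sum.inl (Sum.inr 0))
          + (Sum.elim (Sum.elim (fun i => -m1 i) (fun _ => (0:R))) (fun i => -m2 i)) i
            * (Matrix.fromBlocks
                (Matrix.fromBlocks D1 (colV u1) (rowV w1) (0 : Matrix (Fin 1) (Fin 1) R))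
                (Matrix.fromRows (Matrix.of fun i j => u1 i + m1 i * w2 j) (rowV w2))
                (Matrix.fromCols (Matrix.of fun i j => u2 i + m2 i * w1 j) (colV u2)) D2)
                (Sum.inl (Sum.inr 0)) (Sum.inl (Sum.inr 0)))
        * (Sum.elim (Sum.elim (fun _ => (-1:R)) (fun _ => (0:R))) (fun _ => (-1:R))) j)
      = Matrix.fromBlocks
          (Matrix.fromBlocks (Matrix.of fun i j => D1 i j - u1 i - m1 i * w1 j) (colV u1)
            (rowV w1) (0 : Matrix (Fin 1) (Fin 1) R))
          (Matrix.fromRows (0 : Matrix (Fin p) (Fin r) R) (rowV w2))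
          (Matrix.fromCols (0 : Matrix (Fin r) (Fin p) R) (colV u2))
          (Matrix.of fun i j => D2 i j - u2 i - m2 i * w2 j) := by
    ext i j
    rcases i with (i | i) | i <;> rcases j with (j | j) | j <;>
      simp [colV, rowV, Fin.fin_one_eq_zero, Fin.fin_one_eq_zero] <;> ring
  rw [hmat, detT_s18]

lemma detDJeq (D1 : Matrix (Fin p) (Fin p) R) (u1 w1 m1 : Fin p → R)
    (D2 : Matrix (Fin r) (Fin r) R) (u2 w2 m2 : Fin r → R) :
    (Matrix.of fun i j => (Matrix.fromBlocks
        (Matrix.fromBlocks D1 (colV u1) (rowV w1) (0 : Matrix (Fin 1) (Fin 1) R))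
        (Matrix.fromRows (Matrix.of fun i j => u1 i + m1 i * w2 j) (rowV w2))
        (Matrix.fromCols (Matrix.of fun i j => u2 i + m2 i * w1 j) (colV u2)) D2) i j
        + 1).det
    = (Matrix.fromBlocks (Matrix.of fun i j => D1 i j - u1 i - m1 i * w1 j)
        (colV (fun i => u1 i + 1 - m1 i)) (rowV w1) (1 : Matrix (Fin 1) (Fin 1) R)).det
      * (Matrix.of fun i j => D2 i j - u2 i - m2 i * w2 j).det
      + (Matrix.of fun i j => D1 i j - u1 i - m1 i * w1 j).det
      * (Matrix.fromBlocks (0 : Matrix (Fin 1) (Fin 1) R) (rowV w2)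
          (colV (fun i => u2 i + 1 - m2 i))
          (Matrix.of fun i j => D2 i j - u2 i - m2 i * w2 j)).det := by
  set M := Matrix.of fun i j => (Matrix.fromBlocks
        (Matrix.fromBlocks D1 (colV u1) (rowV w1) (0 : Matrix (Fin 1) (Fin 1) R))
        (Matrix.fromRows (Matrix.of fun i j => u1 i + m1 i * w2 j) (rowV w2))
        (Matrix.fromCols (Matrix.of fun i j => u2 i + m2 i * w1 j) (colV u2)) D2) i j
        + (1:R) with hM
  rw [← det_ops M (Sum.inl (Sum.inr 0))
      (Sum.elim (Sum.elim (fun i => -m1 i) (fun _ => (0:R))) (fun i => -m2 i))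
      (Sum.elim (Sum.elim (fun _ => (-1:R)) (fun _ => (0:R))) (fun _ => (-1:R))) rfl rfl]
  have hmat : (Matrix.of fun i j => M i j
      + (Sum.elim (Sum.elim (fun i => -m1 i) (fun _ => (0:R))) (fun i => -m2 i)) i
        * M (Sum.inl (Sum.inr 0)) j
      + (M i (Sum.inl (Sum.inr 0))
          + (Sum.elim (Sum.elim (fun i => -m1 i) (fun _ => (0:R))) (fun i => -m2 i)) i
            * M (Sum.inl (Sum.inr 0)) (Sum.inl (Sum.inr 0)))
        * (Sum.elim (Sum.elim (fun _ => (-1:R)) (fun _ => (0:R))) (fun _ => (-1:R))) j)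
      = Matrix.fromBlocks
          (Matrix.fromBlocks (Matrix.of fun i j => D1 i j - u1 i - m1 i * w1 j)
            (colV (fun i => u1 i + 1 - m1 i)) (rowV w1) (1 : Matrix (Fin 1) (Fin 1) R))
          (Matrix.fromRows (0 : Matrix (Fin p) (Fin r) R) (rowV w2))
          (Matrix.fromCols (0 : Matrix (Fin r) (Fin p) R) (colV (fun i => u2 i + 1 - m2 i)))
          (Matrix.of fun i j => D2 i j - u2 i - m2 i * w2 j) := by
    ext i j
    rcases i with (i | i) | i <;> rcases j with (j | j) | j <;>
      simp [hM, colV, rowV, Fin.fin_one_eq_zero, Fin.fin_one_eq_zero, Matrix.one_apply] <;> ring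
  rw [hmat, detT_s18]

end Main3


/-- Graham–Hoffman–Hosoya-type identities for the third invariant `κ`, in the
single-cut-vertex case. For `D = [[D1, u1, u1·eᵀ + m1·w2ᵀ], [w1ᵀ, 0, w2ᵀ],
[u2·eᵀ + m2·w1ᵀ, u2, D2]]`, with `M1 = [[D1, u1], [w1ᵀ, 0]]`,
`M2 = [[0, w2ᵀ], [u2, D2]]`, `κ1 = det(D1 − u1·eᵀ − m1·w1ᵀ)`,
`κ2 = det(D2 − u2·eᵀ − m2·w2ᵀ)`, and `κ(D, v₀) = det(D₀ − u·eᵀ − m·wᵀ)` (where `v₀`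
is the middle index, `D₀` is `D` with the middle row and column deleted, and
`u = (u1; u2)`, `w = (w1; w2)`, `m = (m1; m2)`): (i) `κ(D, v₀) = κ1·κ2`;
(ii) `det(D) = det(M1)·κ2 + κ1·det(M2)`;
(iii) `cof(D) = κ1·κ2 + (cof(M1) − κ1)·κ2 + κ1·(cof(M2) − κ2)`. -/
theorem stmt_18 {R : Type*} [CommRing R] {p r : ℕ}
    (D1 : Matrix (Fin p) (Fin p) R) (u1 w1 m1 : Fin p → R)
    (D2 : Matrix (Fin r) (Fin r) R) (u2 w2 m2 : Fin r → R) :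
    (((Matrix.fromBlocks
          (Matrix.of fun i j => D1 i j - u1 i - m1 i * w1 j)
          (Matrix.of fun i j => (u1 i + m1 i * w2 j) - u1 i - m1 i * w2 j)
          (Matrix.of fun i j => (u2 i + m2 i * w1 j) - u2 i - m2 i * w1 j)
          (Matrix.of fun i j => D2 i j - u2 i - m2 i * w2 j) :
            Matrix (Fin p ⊕ Fin r) (Fin p ⊕ Fin r) R).det
        = (Matrix.of fun i j => D1 i j - u1 i - m1 i * w1 j : Matrix (Fin p) (Fin p) R).det
          * (Matrix.of fun i j => D2 i j - u2 i - m2 i * w2 j :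
              Matrix (Fin r) (Fin r) R).det))
    ∧ ((Matrix.fromBlocks
          (Matrix.fromBlocks D1 (colV u1) (rowV w1) (0 : Matrix (Fin 1) (Fin 1) R))
          (Matrix.fromRows (Matrix.of fun i j => u1 i + m1 i * w2 j) (rowV w2))
          (Matrix.fromCols (Matrix.of fun i j => u2 i + m2 i * w1 j) (colV u2))
          D2).det
        = (Matrix.fromBlocks D1 (colV u1) (rowV w1) (0 : Matrix (Fin 1) (Fin 1) R)).det
            * (Matrix.of fun i j => D2 i j - u2 i - m2 i * w2 j :
                Matrix (Fin r) (Fin r) R).det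
          + (Matrix.of fun i j => D1 i j - u1 i - m1 i * w1 j :
                Matrix (Fin p) (Fin p) R).det
            * (Matrix.fromBlocks (0 : Matrix (Fin 1) (Fin 1) R) (rowV w2)
                (colV u2) D2).det)
    ∧ (cofSum ((Matrix.reindex (toFin3 p r) (toFin3 p r))
          (Matrix.fromBlocks
            (Matrix.fromBlocks D1 (colV u1) (rowV w1) (0 : Matrix (Fin 1) (Fin 1) R))
            (Matrix.fromRows (Matrix.of fun i j => u1 i + m1 i * w2 j) (rowV w2))
            (Matrix.fromCols (Matrix.of fun i j => u2 i + m2 i * w1 j) (colV u2))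
            D2))
        = (Matrix.of fun i j => D1 i j - u1 i - m1 i * w1 j :
              Matrix (Fin p) (Fin p) R).det
            * (Matrix.of fun i j => D2 i j - u2 i - m2 i * w2 j :
                Matrix (Fin r) (Fin r) R).det
          + (cofSum ((Matrix.reindex finSumFinEquiv finSumFinEquiv)
                (Matrix.fromBlocks D1 (colV u1) (rowV w1)
                  (0 : Matrix (Fin 1) (Fin 1) R)))
              - (Matrix.of fun i j => D1 i j - u1 i - m1 i * w1 j :
                  Matrix (Fin p) (Fin p) R).det)
            * (Matrix.of fun i j => D2 i j - u2 i - m2 i * w2 j :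
                Matrix (Fin r) (Fin r) R).det
          + (Matrix.of fun i j => D1 i j - u1 i - m1 i * w1 j :
                Matrix (Fin p) (Fin p) R).det
            * (cofSum ((Matrix.reindex finSumFinEquiv finSumFinEquiv)
                  (Matrix.fromBlocks (0 : Matrix (Fin 1) (Fin 1) R) (rowV w2)
                    (colV u2) D2))
                - (Matrix.of fun i j => D2 i j - u2 i - m2 i * w2 j :
                    Matrix (Fin r) (Fin r) R).det)) := by
  refine ⟨?_, ?_, ?_⟩
  · have hB : (Matrix.of fun i j => (u1 i + m1 i * w2 j) - u1 i - m1 i * w2 j)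
        = (0 : Matrix (Fin p) (Fin r) R) := by
      ext i j; simp only [Matrix.of_apply, Matrix.zero_apply]; ring
    have hC : (Matrix.of fun i j => (u2 i + m2 i * w1 j) - u2 i - m2 i * w1 j)
        = (0 : Matrix (Fin r) (Fin p) R) := by
      ext i j; simp only [Matrix.of_apply, Matrix.zero_apply]; ring
    rw [hB, hC, Matrix.det_fromBlocks_zero₂₁]
  · rw [detDeq D1 u1 w1 m1 D2 u2 w2 m2, detM1, detM2]
  · rw [cofSum_reindex (toFin3 p r), cofSum_reindex finSumFinEquiv,
      cofSum_reindex finSumFinEquiv, detDJeq, detDeq, detM1J D1 u1 w1 m1,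
      detM2J D2 u2 w2 m2, detSplit, detM1, detM2]
    ring
end
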